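/- arXiv:0804.3255 — 4 statements merged into one kernel-verified Lean document; each statement's English description precedes it below -/
import Mathlib

section
/- With the setup of the cyclic constraints c_j(ℓ) = sum_{i ∈ P_j} (ℓ_i − ℓ_{[i+1]}), the k × p matrix W whose j-th row represents the linear form c_j has rank exactly k − 1. -/
/-!
A vector `a` lies in the left kernel of `W` iff `a (b i) = a (b [i-1])` for every `i`, where `b i`
is the block containing `i`. Since the cyclic successor visits every index, `a ∘ b` is then
constant, and as every block is nonempty, `a` is constant. So the left kernel is the line of
constant vectors, and rank–nullity gives rank `k - 1`.
-/

open Matrix Function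

theorem Fin.apply_eq_apply_of_apply_finRotate_eq {α : Type*} {n : ℕ} {f : Fin n → α}
    (hf : ∀ i, f (finRotate n i) = f i) (i j : Fin n) : f i = f j := by
  cases n with
  | zero => exact i.elim0
  | succ m =>
    have h0 (i : Fin (m + 1)) : f i = f 0 := by
      induction i using Fin.induction with
      | zero => rfl
      | succ i ih => rw [← Fin.coeSucc_eq_succ, ← finRotate_apply, hf, ih]
    rw [h0 i, h0 j]

theorem Matrix.rank_eq_card_sub_one_of_ker_vecMulLinear {K m n : Type*} [Field K] [Fintype m]
    [Fintype n] {A : Matrix m n K} (hA : LinearMap.ker A.vecMulLinear = K ∙ 1) :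
    A.rank = Fintype.card m - 1 := by
  have hsum := LinearMap.finrank_range_add_finrank_ker Aᵀ.mulVecLin
  rw [← rank, rank_transpose, mulVecLin_transpose, hA, Module.finrank_fintype_fun_eq_card] at hsum
  cases isEmpty_or_nonempty m
  · rw [Fintype.card_eq_zero] at hsum ⊢
    omega
  · rw [finrank_span_singleton one_ne_zero] at hsum
    omega

theorem exists_mem_iff_eq_of_disjoint {ι κ : Type*} {P : κ → Finset ι}
    (hdisj : ∀ j j', j ≠ j' → Disjoint (P j) (P j')) (hcover : ∀ i, ∃ j, i ∈ P j) :
    ∃ b : ι → κ, ∀ i j, i ∈ P j ↔ b i = j := by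
  choose b hb using hcover
  refine ⟨b, fun i j => ⟨fun hi => ?_, fun h => h ▸ hb i⟩⟩
  by_contra hne
  exact Finset.disjoint_left.mp (hdisj _ _ hne) (hb i) hi

section CyclicConstraint

variable {ι κ : Type*} [Fintype κ] [DecidableEq κ] (R : Type*) [CommRing R]

/-- `W` for the partition into the fibres of `b`, with `σ` playing the cyclic successor. -/
def cyclicConstraintMatrix (b : ι → κ) (σ : Equiv.Perm ι) : Matrix κ ι R :=
  fun j i => (if b i = j then 1 else 0) - (if b (σ.symm i) = j then 1 else 0)

variable {R}

theorem vecMul_cyclicConstraintMatrix (b : ι → κ) (σ : Equiv.Perm ι) (a : κ → R) :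
    a ᵥ* cyclicConstraintMatrix R b σ = a ∘ b - a ∘ b ∘ σ.symm := by
  ext i
  simp [vecMul, dotProduct, cyclicConstraintMatrix, mul_sub]

theorem vecMul_cyclicConstraintMatrix_eq_zero_iff (b : ι → κ) (σ : Equiv.Perm ι) (a : κ → R) :
    a ᵥ* cyclicConstraintMatrix R b σ = 0 ↔ ∀ i, a (b (σ i)) = a (b i) := by
  rw [vecMul_cyclicConstraintMatrix, sub_eq_zero, funext_iff, ← σ.forall_congr_right]
  simp [eq_comm]

theorem ker_vecMulLinear_cyclicConstraintMatrix {n : ℕ} {b : Fin n → κ} (hb : Surjective b) :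
    LinearMap.ker (cyclicConstraintMatrix R b (finRotate n)).vecMulLinear = R ∙ 1 := by
  ext a
  rw [LinearMap.mem_ker, vecMulLinear_apply, vecMul_cyclicConstraintMatrix_eq_zero_iff,
    Submodule.mem_span_singleton]
  constructor
  · intro ha
    rcases isEmpty_or_nonempty κ with _ | ⟨⟨j₀⟩⟩
    · exact ⟨0, Subsingleton.elim _ _⟩
    obtain ⟨i₀, rfl⟩ := hb j₀
    refine ⟨a (b i₀), funext fun j => ?_⟩
    obtain ⟨i, rfl⟩ := hb j
    simpa using Fin.apply_eq_apply_of_apply_finRotate_eq (f := a ∘ b) ha i₀ i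
  · rintro ⟨c, rfl⟩ i
    rfl

end CyclicConstraint

theorem constraint_matrix_rank_general (p k : ℕ)
    (P : Fin k → Finset (Fin p))
    (hne : ∀ j, (P j).Nonempty)
    (hdisj : ∀ j j', j ≠ j' → Disjoint (P j) (P j'))
    (hcover : (Finset.univ : Finset (Fin p)) = Finset.univ.biUnion P)
    (W : Matrix (Fin k) (Fin p) ℝ)
    (hW : ∀ j i, W j i = (if i ∈ P j then (1 : ℝ) else 0) -
        (if (finRotate p).symm i ∈ P j then (1 : ℝ) else 0)) :
    W.rank = k - 1 := by
  obtain ⟨b, hb⟩ := exists_mem_iff_eq_of_disjoint hdisj fun i => by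
    simpa using hcover.le (Finset.mem_univ i)
  have hb_surj : Surjective b := fun j =>
    let ⟨i, hi⟩ := hne j
    ⟨i, (hb i j).1 hi⟩
  have hW_eq : W = cyclicConstraintMatrix ℝ b (finRotate p) := by
    ext j i
    simp only [hW, hb, cyclicConstraintMatrix]
  rw [hW_eq, rank_eq_card_sub_one_of_ker_vecMulLinear
    (ker_vecMulLinear_cyclicConstraintMatrix hb_surj), Fintype.card_fin]

/-- The constraint matrix `W = W' - W''`, where `W'_{j,i} = 1_{i ∈ P_j}` and `W''` is `W'`
with rows circularly shifted right by one position (i.e. `W''_{j,i} = 1_{[i-1] ∈ P_j}`,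
with `[i-1]` the cyclic predecessor, inverse of `finRotate p`), has rank exactly `k - 1`. -/
theorem constraint_matrix_rank (p k : ℕ) (hk : 1 ≤ k) (hkp : k ≤ p)
    (P : Fin k → Finset (Fin p))
    (hne : ∀ j, (P j).Nonempty)
    (hdisj : ∀ j j', j ≠ j' → Disjoint (P j) (P j'))
    (hcover : (Finset.univ : Finset (Fin p)) = Finset.univ.biUnion P)
    (W : Matrix (Fin k) (Fin p) ℝ)
    (hW : ∀ j i, W j i = (if i ∈ P j then (1 : ℝ) else 0) -
        (if (finRotate p).symm i ∈ P j then (1 : ℝ) else 0)) :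
    W.rank = k - 1 :=
  constraint_matrix_rank_general p k P hne hdisj hcover W hW
end

section
/- The convolution identity ∫_{−∞}^{+∞} sinc(a − y) · sinc(y − b) dy = sinc(a − b) holds for all real a, b. -/
open Real

/-- The normalized sinc function. -/
noncomputable def nsinc (y : ℝ) : ℝ := if y = 0 then 1 else Real.sin (π * y) / (π * y)

/-!
`nsinc (a - ·)` is the Fourier transform of the modulated box `u a = 𝟙[-1/2, 1/2] · e^{2πia·}`,
so the integrand is the Fourier transform of the convolution `u a ⋆ u b`. That integrand is
integrable (`nsinc x ^ 2 ≤ 2 / (1 + x ^ 2)`), and `u a ⋆ u b` is continuous because `u b` is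
bounded and continuous off the two points `±1/2`. Fourier inversion at `0` then gives
`∫ = (u a ⋆ u b) 0 = 𝓕 (u a) b = nsinc (a - b)`.
-/

open MeasureTheory Filter Set ContinuousLinearMap Convolution FourierTransform

theorem nsinc_eq_sinc (x : ℝ) : nsinc x = sinc (π * x) := by
  simp [nsinc, sinc, pi_ne_zero]

theorem continuous_nsinc : Continuous nsinc := by
  rw [funext nsinc_eq_sinc]
  fun_prop

theorem nsinc_neg (x : ℝ) : nsinc (-x) = nsinc x := by
  rw [nsinc_eq_sinc, nsinc_eq_sinc, mul_neg, sinc_neg]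

theorem abs_mul_nsinc_le_one (x : ℝ) : |x * nsinc x| ≤ 1 := by
  rcases eq_or_ne x 0 with rfl | hx
  · simp
  rw [nsinc, if_neg hx, mul_div_assoc', mul_comm π, mul_div_mul_left _ _ hx, abs_div,
    abs_of_pos pi_pos, div_le_one pi_pos]
  exact (abs_sin_le_one _).trans (by linarith [pi_gt_three])

theorem one_add_sq_mul_nsinc_sq_le (x : ℝ) : (1 + x ^ 2) * nsinc x ^ 2 ≤ 2 := by
  have h₁ : nsinc x ^ 2 ≤ 1 := by
    simpa [nsinc_eq_sinc, sq_abs] using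
      pow_le_one₀ (n := 2) (abs_nonneg _) (abs_sinc_le_one (π * x))
  have h₂ : (x * nsinc x) ^ 2 ≤ 1 := by
    simpa [sq_abs] using pow_le_one₀ (n := 2) (abs_nonneg _) (abs_mul_nsinc_le_one x)
  nlinarith

theorem integrable_nsinc_sq : Integrable fun x => nsinc x ^ 2 := by
  refine (integrable_inv_one_add_sq.const_mul 2).mono'
    (continuous_nsinc.pow 2).aestronglyMeasurable (.of_forall fun x => ?_)
  rw [Real.norm_of_nonneg (sq_nonneg _), ← div_eq_mul_inv, le_div_iff₀ (by positivity), mul_comm]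
  exact one_add_sq_mul_nsinc_sq_le x

theorem integrable_nsinc_sub_mul_nsinc_sub (a b : ℝ) :
    Integrable fun y => nsinc (a - y) * nsinc (y - b) := by
  refine (((integrable_nsinc_sq.comp_sub_left a).add
    (integrable_nsinc_sq.comp_sub_right b)).div_const 2).mono'
    ((continuous_nsinc.comp (continuous_sub_left a)).mul
      (continuous_nsinc.comp (continuous_sub_right b))).aestronglyMeasurable
    (.of_forall fun y => ?_)
  rw [Real.norm_eq_abs, abs_mul, Pi.add_apply, le_div_iff₀ two_pos]
  nlinarith [sq_nonneg (|nsinc (a - y)| - |nsinc (y - b)|), sq_abs (nsinc (a - y)),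
    sq_abs (nsinc (y - b))]

theorem ContinuousAt.indicator_of_notMem_frontier {X M : Type*} [TopologicalSpace X]
    [TopologicalSpace M] [Zero M] {s : Set X} {f : X → M} {x : X} (hf : ContinuousAt f x)
    (hx : x ∉ frontier s) : ContinuousAt (s.indicator f) x := by
  rw [frontier, Set.mem_sdiff, not_and_or, not_not] at hx
  rcases hx with hx | hx
  · refine (continuousAt_const (y := (0 : M))).congr (EventuallyEq.symm ?_)
    filter_upwards [isClosed_closure.isOpen_compl.mem_nhds hx] with y hy
    exact indicator_of_notMem (fun h => hy (subset_closure h)) f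
  · refine hf.congr (EventuallyEq.symm ?_)
    filter_upwards [isOpen_interior.mem_nhds hx] with y hy
    exact indicator_of_mem (interior_subset hy) f

theorem continuousAt_convolution_of_ae_continuousAt {𝕜 G E E' F : Type*}
    [NontriviallyNormedField 𝕜] [NormedAddCommGroup E] [NormedAddCommGroup E']
    [NormedAddCommGroup F] [NormedSpace 𝕜 E] [NormedSpace 𝕜 E'] [NormedSpace 𝕜 F]
    [NormedSpace ℝ F] [AddCommGroup G] [TopologicalSpace G] [IsTopologicalAddGroup G]
    [FirstCountableTopology G] [MeasurableSpace G] [BorelSpace G] {μ : Measure G}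
    [μ.IsAddLeftInvariant] [μ.IsNegInvariant] (L : E →L[𝕜] E' →L[𝕜] F)
    {f : G → E} {g : G → E'} {C : ℝ} (hf : Integrable f μ) (hg : StronglyMeasurable g)
    (hgC : ∀ x, ‖g x‖ ≤ C) (hgc : ∀ᵐ x ∂μ, ContinuousAt g x) (x₀ : G) :
    ContinuousAt (f ⋆[L, μ] g) x₀ := by
  refine continuousAt_of_dominated (bound := fun t => ‖L‖ * ‖f t‖ * C)
    (.of_forall fun x => hf.aestronglyMeasurable.convolution_integrand_snd' L
      hg.aestronglyMeasurable)
    (.of_forall fun x => .of_forall fun t => L.le_of_opNorm₂_le_of_le le_rfl le_rfl (hgC _))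
    ((hf.norm.const_mul _).mul_const _) ?_
  filter_upwards [(Measure.measurePreserving_sub_left μ x₀).quasiMeasurePreserving.ae hgc]
    with t ht
  exact (L (f t)).continuous.continuousAt.comp
    (ht.comp_of_eq (continuous_sub_right t).continuousAt rfl)

theorem Real.fourierInv_apply_zero {V E : Type*} [NormedAddCommGroup V] [InnerProductSpace ℝ V]
    [MeasurableSpace V] [BorelSpace V] [FiniteDimensional ℝ V] [NormedAddCommGroup E]
    [NormedSpace ℂ E] (f : V → E) : 𝓕⁻ f 0 = ∫ v, f v := by
  simp [Real.fourierInv_eq]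

theorem integral_fourierChar_Icc (x : ℝ) :
    ∫ s in Icc (-(1 / 2)) (1 / 2), (𝐞 (x * s) : ℂ) = nsinc x := by
  rcases eq_or_ne x 0 with rfl | hx
  · norm_num [nsinc]
  have hc : (2 * π * x * Complex.I) ≠ 0 := by simp [pi_ne_zero, hx]
  rw [integral_Icc_eq_integral_Ioc, ← intervalIntegral.integral_of_le (by norm_num)]
  simp_rw [fourierChar_apply, show ∀ s : ℝ, ((2 * π * (x * s) : ℝ) : ℂ) * Complex.I
    = 2 * π * x * Complex.I * s from fun s => by push_cast; ring]
  rw [integral_exp_mul_complex hc, nsinc, if_neg hx]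
  push_cast
  rw [show 2 * π * x * Complex.I * (1 / 2) = π * x * Complex.I by ring,
    show 2 * π * x * Complex.I * -(1 / 2) = -(π * x) * Complex.I by ring, Complex.sin]
  have hx' : (x : ℂ) ≠ 0 := Complex.ofReal_ne_zero.mpr hx
  have hπ : (π : ℂ) ≠ 0 := Complex.ofReal_ne_zero.mpr pi_ne_zero
  field_simp
  rw [Complex.I_sq]
  ring

noncomputable def modulatedBox (a : ℝ) : ℝ → ℂ :=
  (Icc (-(1 / 2)) (1 / 2)).indicator fun s => 𝐞 (a * s)

theorem fourier_modulatedBox (a y : ℝ) : 𝓕 (modulatedBox a) y = nsinc (a - y) := by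
  rw [Real.fourier_real_eq, ← integral_fourierChar_Icc, ← integral_indicator measurableSet_Icc]
  congr 1 with s
  simp only [modulatedBox, indicator_apply, smul_ite, smul_zero]
  congr 1
  simp only [Circle.smul_def, smul_eq_mul, ← Circle.coe_mul, ← AddChar.map_add_eq_mul]
  ring_nf

theorem continuous_fourierChar_mul (a : ℝ) : Continuous fun s : ℝ => (𝐞 (a * s) : ℂ) := by
  fun_prop

theorem integrable_modulatedBox (a : ℝ) : Integrable (modulatedBox a) :=
  (continuous_fourierChar_mul a).integrableOn_Icc.integrable_indicator measurableSet_Icc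

theorem stronglyMeasurable_modulatedBox (a : ℝ) : StronglyMeasurable (modulatedBox a) :=
  ((continuous_fourierChar_mul a).measurable.indicator measurableSet_Icc).stronglyMeasurable

theorem norm_modulatedBox_le (a s : ℝ) : ‖modulatedBox a s‖ ≤ 1 :=
  (norm_indicator_le_norm_self _ _).trans_eq (Circle.norm_coe _)

theorem ae_continuousAt_modulatedBox (a : ℝ) : ∀ᵐ s, ContinuousAt (modulatedBox a) s := by
  have hnull : ∀ᵐ s : ℝ, s ∉ frontier (Icc (-(1 / 2) : ℝ) (1 / 2)) := by
    rw [← measure_eq_zero_iff_ae_notMem, frontier_Icc (by norm_num)]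
    exact (Set.toFinite _).measure_zero _
  filter_upwards [hnull] with s hs
  exact (continuous_fourierChar_mul a).continuousAt.indicator_of_notMem_frontier hs

theorem modulatedBox_convolution_zero (a b : ℝ) :
    (modulatedBox a ⋆[mul ℂ ℂ] modulatedBox b) 0 = nsinc (a - b) := by
  rw [convolution_def, ← fourier_modulatedBox, Real.fourier_real_eq]
  congr 1 with t
  simp only [mul_apply', zero_sub, modulatedBox, indicator_apply, neg_mem_Icc_iff, neg_neg]
  split_ifs
  · simp only [Circle.smul_def, smul_eq_mul, mul_comm, mul_neg]
  · simp

/-- Convolution identity: `∫ sinc(a - y) sinc(y - b) dy = sinc(a - b)`. -/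
theorem sinc_convolution (a b : ℝ) :
    ∫ y : ℝ, nsinc (a - y) * nsinc (y - b) = nsinc (a - b) := by
  have hw : Integrable (modulatedBox a ⋆[mul ℂ ℂ] modulatedBox b) :=
    (integrable_modulatedBox a).integrable_convolution _ (integrable_modulatedBox b)
  have hFw (y : ℝ) : 𝓕 (modulatedBox a ⋆[mul ℂ ℂ] modulatedBox b) y
      = ((nsinc (a - y) * nsinc (y - b) : ℝ) : ℂ) := by
    rw [Real.fourier_mul_convolution_eq (integrable_modulatedBox a) (integrable_modulatedBox b),
      fourier_modulatedBox, fourier_modulatedBox, ← nsinc_neg (b - y), neg_sub,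
      Complex.ofReal_mul]
  have hFw_int : Integrable (𝓕 (modulatedBox a ⋆[mul ℂ ℂ] modulatedBox b)) :=
    (integrable_nsinc_sub_mul_nsinc_sub a b).ofReal.congr (.of_forall fun y => (hFw y).symm)
  have hinv := hw.fourierInv_fourier_eq hFw_int <|
    continuousAt_convolution_of_ae_continuousAt _ (integrable_modulatedBox a)
      (stronglyMeasurable_modulatedBox b) (norm_modulatedBox_le b)
      (ae_continuousAt_modulatedBox b) 0
  simp_rw [Real.fourierInv_apply_zero, hFw, integral_complex_ofReal,
    modulatedBox_convolution_zero] at hinv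
  exact_mod_cast hinv
end

section
/- The p-th moment of the Marčenko-Pastur distribution with ratio parameter β ∈ (0,1] equals the Narayana polynomial: ∫_{c_2}^{c_1} x^p · sqrt((c_1 − x)(x − c_2)) / (2π x β) dx = sum_{k=1}^{p} T(p,k) β^{p−k}, where T(p,k) = (1/k)·C(p−1, k−1)·C(p, k−1) are the Narayana numbers and c_{1,2} = (1 ± √β)^2. -/
/-!
Substituting `x = m - r cos θ` with `m = 1 + β`, `r = 2√β` turns the `p`-th moment into
`(2/π) ∫₀^π (m - r cos θ)^(p-1) sin² θ dθ`. Expanding binomially, odd powers of `cos` integrate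
to zero and `∫₀^π cos^(2i) θ sin² θ dθ = π Cat(i) / (2·4^i)`, so the moment equals
`∑ᵢ C(p-1, 2i) Cat(i) β^i (1+β)^(p-1-2i)`. Its coefficient of `β^e` is
`T(p, e+1) = T(p, p-e)`: after the trinomial revision
`C(n,2i) C(2i,i) C(n-2i,e-i) = C(n,e) C(e,i) C(n-e,i)` (`n = p-1`) the coefficient sum collapses by
Vandermonde's identity.
-/

open Finset Real intervalIntegral

theorem Nat.choose_mul_choose_sub_comm (n a b : ℕ) :
    n.choose a * (n - a).choose b = n.choose b * (n - b).choose a := by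
  have ha := Nat.choose_mul (n := n) (k := a + b) (Nat.le_add_right a b)
  have hb := Nat.choose_mul (n := n) (k := a + b) (Nat.le_add_left b a)
  rw [Nat.add_sub_cancel_left] at ha
  rw [Nat.add_sub_cancel] at hb
  rw [← ha, ← hb, Nat.choose_symm_add]

theorem Nat.choose_two_mul_mul_centralBinom_mul_choose {n e i : ℕ} (hi : i ≤ e) :
    n.choose (2 * i) * i.centralBinom * (n - 2 * i).choose (e - i) =
      n.choose e * e.choose i * (n - e).choose i := by
  have hsplit : n.choose (2 * i) * i.centralBinom = n.choose i * (n - i).choose i := by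
    rw [Nat.centralBinom, Nat.choose_mul (by omega), show 2 * i - i = i by omega]
  have hinner : (n - i).choose i * (n - 2 * i).choose (e - i) = (n - i).choose e * e.choose i := by
    rw [Nat.choose_mul hi, show n - i - i = n - 2 * i by omega]
  rw [hsplit, mul_assoc, hinner, ← mul_assoc, Nat.choose_mul_choose_sub_comm]
  ring

theorem Nat.sum_range_choose_succ_mul_choose (m e : ℕ) :
    ∑ i ∈ range (e + 1), (e + 1).choose (i + 1) * m.choose i = (m + (e + 1)).choose e := by
  rw [Nat.add_choose_eq,
    Nat.sum_antidiagonal_eq_sum_range_succ (fun a b => m.choose a * (e + 1).choose b)]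
  refine sum_congr rfl fun i hi => ?_
  rw [mem_range] at hi
  rw [mul_comm, Nat.choose_symm_of_eq_add (show e + 1 = (e - i) + (i + 1) by omega)]

theorem Nat.succ_mul_sum_choose_two_mul_mul_catalan_mul_choose {n e : ℕ} (he : e ≤ n) :
    (e + 1) * ∑ i ∈ range (e + 1), n.choose (2 * i) * catalan i * (n - 2 * i).choose (e - i) =
      n.choose e * (n + 1).choose e := by
  have hterm : ∀ i ∈ range (e + 1),
      (e + 1) * (n.choose (2 * i) * catalan i * (n - 2 * i).choose (e - i)) =
        n.choose e * ((e + 1).choose (i + 1) * (n - e).choose i) := by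
    intro i hi
    apply Nat.eq_of_mul_eq_mul_left (Nat.succ_pos i)
    calc (i + 1) * ((e + 1) * (n.choose (2 * i) * catalan i * (n - 2 * i).choose (e - i)))
        = (e + 1) * (n.choose (2 * i) * ((i + 1) * catalan i) * (n - 2 * i).choose (e - i)) := by
          ring
      _ = n.choose e * ((e + 1) * e.choose i) * (n - e).choose i := by
        rw [succ_mul_catalan_eq_centralBinom,
          Nat.choose_two_mul_mul_centralBinom_mul_choose (by simpa [Nat.lt_succ_iff] using hi)]
        ring
      _ = (i + 1) * (n.choose e * ((e + 1).choose (i + 1) * (n - e).choose i)) := by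
        rw [Nat.add_one_mul_choose_eq]; ring
  rw [mul_sum, sum_congr rfl hterm, ← mul_sum, Nat.sum_range_choose_succ_mul_choose,
    show n - e + (e + 1) = n + 1 by omega]

noncomputable def narayana (p k : ℕ) : ℝ :=
  1 / (k : ℝ) * ((p - 1).choose (k - 1) : ℝ) * (p.choose (k - 1) : ℝ)

theorem narayana_succ_succ (n e : ℕ) :
    narayana (n + 1) (e + 1) = n.choose e * (n + 1).choose e / (e + 1) := by
  simp only [narayana, Nat.add_sub_cancel]
  push_cast
  ring

theorem narayana_symm {n k : ℕ} (hk : k ≤ n) :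
    narayana (n + 1) (n + 1 - k) = narayana (n + 1) (k + 1) := by
  obtain ⟨j, rfl⟩ := Nat.exists_eq_add_of_le hk
  have hchoose : (k + j + 1).choose (k + 1) * (k + 1) = (k + j + 1).choose k * (j + 1) := by
    rw [Nat.choose_succ_right_eq]; congr 2; omega
  rw [show k + j + 1 - k = j + 1 by omega, narayana_succ_succ, narayana_succ_succ,
    Nat.choose_symm_add, Nat.choose_symm_of_eq_add (show k + j + 1 = j + (k + 1) by ring)]
  have := congrArg (Nat.cast : ℕ → ℝ) hchoose
  push_cast at this
  field_simp
  linear_combination (((k + j).choose j : ℕ) : ℝ) * this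

theorem sum_narayana_mul_pow_reflect (p : ℕ) (x : ℝ) :
    ∑ e ∈ range p, narayana p (e + 1) * x ^ e = ∑ k ∈ Icc 1 p, narayana p k * x ^ (p - k) := by
  cases p with
  | zero => simp
  | succ n =>
    refine sum_nbij' (fun e => n + 1 - e) (fun k => n + 1 - k) ?_ ?_ ?_ ?_ ?_
    all_goals intro a ha
    all_goals simp only [mem_range, mem_Icc] at ha
    · simp only [mem_Icc]; omega
    · simp only [mem_range]; omega
    · omega
    · omega
    · rw [narayana_symm (by omega), show n + 1 - (n + 1 - a) = a by omega]

theorem sum_choose_two_mul_mul_catalan_mul_pow (n : ℕ) (x : ℝ) :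
    ∑ i ∈ range (n + 1), (n.choose (2 * i) * catalan i : ℝ) * x ^ i * (1 + x) ^ (n - 2 * i) =
      ∑ e ∈ range (n + 1), narayana (n + 1) (e + 1) * x ^ e := by
  have hbinom : ∀ i ∈ range (n + 1),
      (1 + x) ^ (n - 2 * i) = ∑ j ∈ range (n + 1 - i), ((n - 2 * i).choose j : ℝ) * x ^ j := by
    intro i hi
    rw [add_comm, add_pow]
    simp only [one_pow, mul_one]
    rw [mem_range] at hi
    rw [sum_subset (range_subset_range.2 (show n - 2 * i + 1 ≤ n + 1 - i by omega))]
    · exact sum_congr rfl fun j _ => mul_comm _ _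
    · intro j _ hj
      rw [Nat.choose_eq_zero_of_lt (by simpa using hj), Nat.cast_zero, mul_zero]
  have hcoeff : ∀ e ∈ range (n + 1),
      ∑ i ∈ range (e + 1), (n.choose (2 * i) * catalan i * (n - 2 * i).choose (e - i) : ℝ) =
        narayana (n + 1) (e + 1) := by
    intro e he
    rw [narayana_succ_succ, eq_div_iff (by positivity)]
    exact_mod_cast (mul_comm _ _).trans
      (Nat.succ_mul_sum_choose_two_mul_mul_catalan_mul_choose (by simpa [Nat.lt_succ_iff] using he))
  calc _ = ∑ i ∈ range (n + 1), ∑ j ∈ range (n + 1 - i),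
        (n.choose (2 * i) * catalan i * (n - 2 * i).choose j : ℝ) * x ^ (i + j) := by
        refine sum_congr rfl fun i hi => ?_
        rw [hbinom i hi, mul_sum]
        refine sum_congr rfl fun j _ => ?_
        ring
    _ = ∑ e ∈ range (n + 1), ∑ i ∈ range (e + 1),
        (n.choose (2 * i) * catalan i * (n - 2 * i).choose (e - i) : ℝ) * x ^ (i + (e - i)) :=
        (sum_range_diag_flip _ fun i j => _).symm
    _ = _ := by
        refine sum_congr rfl fun e he => ?_
        rw [← hcoeff e he, sum_mul]
        refine sum_congr rfl fun i hi => ?_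
        rw [Nat.add_sub_cancel' (by simpa [Nat.lt_succ_iff] using hi)]

theorem Finset.sum_range_two_mul {M : Type*} [AddCommMonoid M] (n : ℕ) (f : ℕ → M) :
    ∑ j ∈ range (2 * n), f j = ∑ i ∈ range n, (f (2 * i) + f (2 * i + 1)) := by
  induction n with
  | zero => simp
  | succ n ih =>
    rw [Nat.mul_succ, sum_range_succ, sum_range_succ, sum_range_succ, ih, add_assoc]

theorem integral_cos_pow_two_mul (n : ℕ) :
    ∫ θ in 0..π, cos θ ^ (2 * n) = π * n.centralBinom / 4 ^ n := by
  induction n with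
  | zero => simp
  | succ n ih =>
    have hrec := Nat.succ_mul_centralBinom_succ n
    rw [Nat.mul_succ, integral_cos_pow, ih, sin_zero, sin_pi, mul_zero, mul_zero, sub_zero,
      zero_div, zero_add]
    rw [← Nat.cast_inj (R := ℝ)] at hrec
    push_cast at hrec ⊢
    field_simp
    linear_combination (-2 * 4 ^ n) * hrec

theorem integral_cos_pow_two_mul_mul_sin_sq (n : ℕ) :
    ∫ θ in 0..π, cos θ ^ (2 * n) * sin θ ^ 2 = π * catalan n / (2 * 4 ^ n) := by
  have hcat := congrArg (Nat.cast : ℕ → ℝ) (succ_mul_catalan_eq_centralBinom n)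
  simp_rw [sin_sq, mul_sub, mul_one, ← pow_add]
  rw [integral_sub (by apply Continuous.intervalIntegrable; fun_prop)
    (by apply Continuous.intervalIntegrable; fun_prop), integral_cos_pow,
    integral_cos_pow_two_mul, sin_zero, sin_pi]
  push_cast at hcat ⊢
  field_simp
  linear_combination (-π) * hcat

theorem integral_cos_pow_two_mul_add_one_mul_sin_sq (n : ℕ) :
    ∫ θ in 0..π, cos θ ^ (2 * n + 1) * sin θ ^ 2 = 0 := by
  simp_rw [mul_comm (cos _ ^ _)]
  simp [integral_sin_pow_mul_cos_pow_odd]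

theorem integral_mul_sqrt_semicircle {m r : ℝ} (hr : 0 ≤ r) {g : ℝ → ℝ} (hg : Continuous g) :
    ∫ x in (m - r)..(m + r), g x * √((m + r - x) * (x - (m - r))) =
      r ^ 2 * ∫ θ in 0..π, g (m - r * cos θ) * sin θ ^ 2 := by
  have hsubst := integral_comp_mul_deriv (a := 0) (b := π) (f := fun θ => m - r * cos θ)
    (fun θ _ => by simpa using ((hasDerivAt_cos θ).const_mul r).const_sub m)
    (by fun_prop) (g := fun x => g x * √((m + r - x) * (x - (m - r)))) (by fun_prop)
  simp only [cos_zero, cos_pi] at hsubst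
  rw [show m - r * 1 = m - r by ring, show m - r * -1 = m + r by ring] at hsubst
  rw [← hsubst, ← integral_const_mul]
  refine integral_congr fun θ hθ => ?_
  rw [Set.uIcc_of_le pi_pos.le] at hθ
  have hsqrt : √((m + r - (m - r * cos θ)) * (m - r * cos θ - (m - r))) = r * sin θ := by
    rw [show (m + r - (m - r * cos θ)) * (m - r * cos θ - (m - r)) = (r * sin θ) ^ 2 by
      linear_combination (-r ^ 2) * sin_sq_add_cos_sq θ]
    exact sqrt_sq (mul_nonneg hr (sin_nonneg_of_mem_Icc hθ))
  simp only [Function.comp, hsqrt]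
  ring

theorem integral_pow_mul_sqrt_semicircle {m r : ℝ} (hr : 0 ≤ r) (n : ℕ) :
    ∫ x in (m - r)..(m + r), x ^ n * √((m + r - x) * (x - (m - r))) =
      π * r ^ 2 / 2 * ∑ i ∈ range (n + 1),
        (n.choose (2 * i) * catalan i : ℝ) * (r ^ 2 / 4) ^ i * m ^ (n - 2 * i) := by
  set a : ℕ → ℝ := fun j => n.choose j * (-r) ^ j * m ^ (n - j) with ha
  have hexpand : ∀ θ, (m - r * cos θ) ^ n * sin θ ^ 2 =
      ∑ j ∈ range (n + 1), a j * (cos θ ^ j * sin θ ^ 2) := fun θ => by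
    rw [sub_eq_neg_add, add_pow, sum_mul]
    refine sum_congr rfl fun j _ => ?_
    rw [ha, neg_mul_eq_neg_mul, mul_pow]
    ring
  have hvanish : ∀ j ∈ range (2 * (n + 1)), j ∉ range (n + 1) →
      a j * ∫ θ in 0..π, cos θ ^ j * sin θ ^ 2 = 0 := fun j _ hj => by
    simp [ha, Nat.choose_eq_zero_of_lt (show n < j by simpa using hj)]
  simp_rw [integral_mul_sqrt_semicircle hr (continuous_pow n), hexpand]
  rw [integral_finsetSum fun j _ => by apply Continuous.intervalIntegrable; fun_prop]
  simp_rw [integral_const_mul]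
  rw [sum_subset (range_subset_range.2 (by omega)) hvanish, sum_range_two_mul, mul_sum, mul_sum]
  refine sum_congr rfl fun i _ => ?_
  rw [integral_cos_pow_two_mul_mul_sin_sq, integral_cos_pow_two_mul_add_one_mul_sin_sq, ha]
  simp only [pow_mul, neg_sq, mul_zero, add_zero, div_pow]
  field_simp

theorem marcenko_pastur_moments_general (β : ℝ) (hβ : 0 < β) (p : ℕ) (hp : 1 ≤ p)
    (c₁ c₂ : ℝ) (hc₁ : c₁ = (1 + Real.sqrt β) ^ 2) (hc₂ : c₂ = (1 - Real.sqrt β) ^ 2) :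
    ∫ x in c₂..c₁, x ^ p * Real.sqrt ((c₁ - x) * (x - c₂)) / (2 * π * x * β) =
      ∑ k ∈ Finset.Icc 1 p,
        (1 / (k : ℝ)) * (Nat.choose (p - 1) (k - 1) : ℝ) * (Nat.choose p (k - 1) : ℝ) *
          β ^ (p - k) := by
  obtain ⟨n, rfl⟩ : ∃ n, p = n + 1 := ⟨p - 1, by omega⟩
  have hcancel : ∫ x in c₂..c₁, x ^ (n + 1) * √((c₁ - x) * (x - c₂)) / (2 * π * x * β) =
      (∫ x in c₂..c₁, x ^ n * √((c₁ - x) * (x - c₂))) / (2 * π * β) := by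
    rw [← integral_div]
    refine integral_congr_ae ?_
    filter_upwards [MeasureTheory.Measure.ae_ne MeasureTheory.volume 0] with x hx _
    field_simp
    ring
  have hs : √β ^ 2 = β := sq_sqrt hβ.le
  obtain rfl : c₁ = 1 + β + 2 * √β := by rw [hc₁]; linear_combination hs
  obtain rfl : c₂ = 1 + β - 2 * √β := by rw [hc₂]; linear_combination hs
  change _ = ∑ k ∈ Icc 1 (n + 1), narayana (n + 1) k * β ^ (n + 1 - k)
  rw [hcancel, integral_pow_mul_sqrt_semicircle (by positivity), mul_pow, hs,
    show (2 : ℝ) ^ 2 * β / 4 = β by ring, sum_choose_two_mul_mul_catalan_mul_pow,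
    sum_narayana_mul_pow_reflect]
  field_simp

/-- The `p`-th moment of the Marčenko-Pastur distribution with parameter `β ∈ (0,1]`
equals the Narayana polynomial `∑_{k=1}^p T(p,k) β^{p-k}`. -/
theorem marcenko_pastur_moments (β : ℝ) (hβ : 0 < β) (hβ1 : β ≤ 1) (p : ℕ) (hp : 1 ≤ p)
    (c₁ c₂ : ℝ) (hc₁ : c₁ = (1 + Real.sqrt β) ^ 2) (hc₂ : c₂ = (1 - Real.sqrt β) ^ 2) :
    ∫ x in c₂..c₁, x ^ p * Real.sqrt ((c₁ - x) * (x - c₂)) / (2 * π * x * β) =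
      ∑ k ∈ Finset.Icc 1 p,
        (1 / (k : ℝ)) * (Nat.choose (p - 1) (k - 1) : ℝ) * (Nat.choose p (k - 1) : ℝ) *
          β ^ (p - k) :=
  marcenko_pastur_moments_general β hβ p hp c₁ c₂ hc₁ hc₂
end

section
/- For β ∈ (0,1] and α > 0, the integral of αβ/(x + αβ) against the Marčenko-Pastur density equals (2β − θ + sqrt(θ² − 4β))/(2β), where θ = 1 + β(1 + α). That is, ∫_{c_2}^{c_1} [αβ/(x+αβ)] · sqrt((c_1−x)(x−c_2))/(2πxβ) dx = (2β − θ + sqrt(θ² − 4β))/(2β). -/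
/-!
Partial fractions, `αβ / ((x + αβ) x) = 1 / x - 1 / (x + αβ)`, and the shift `y = x + αβ` reduce
the integral to two instances of
`∫ y in p..q, √((q - y) (y - p)) / y = π / 2 * (p + q - 2 √(p q))` for `0 ≤ p < q`,
one on `[c₂, c₁]` and one on `[c₂ + αβ, c₁ + αβ]`; there `c₂ c₁ = (1 - β)²` and
`(c₂ + αβ)(c₁ + αβ) = θ² - 4β`. That integral is evaluated with an explicit primitive. Its
integrability, including at the singular endpoint `p = 0` (the case `β = 1`), comes for free
because the integrand is a nonnegative derivative.
-/

open Real Set MeasureTheory intervalIntegral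

theorem HasDerivAt.arcsin {f : ℝ → ℝ} {f' y : ℝ} (hf : HasDerivAt f f' y) (hy : f y ^ 2 < 1) :
    HasDerivAt (fun x => arcsin (f x)) (f' / √(1 - f y ^ 2)) y := by
  have hne : f y ≠ -1 ∧ f y ≠ 1 := by
    constructor <;> rintro h <;> norm_num [h] at hy
  exact ((hasDerivAt_arcsin hne.1 hne.2).comp y hf).congr_deriv (by ring)

theorem hasDerivAt_sqrt_sub_mul_sub {p q y : ℝ} (hpy : p < y) (hyq : y < q) :
    HasDerivAt (fun y => √((q - y) * (y - p)))
      ((p + q - 2 * y) / (2 * √((q - y) * (y - p)))) y := by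
  have hP : (q - y) * (y - p) ≠ 0 := (mul_pos (by linarith) (by linarith)).ne'
  have hquad : HasDerivAt (fun y => (q - y) * (y - p)) (p + q - 2 * y) y := by
    refine (((hasDerivAt_id y).const_sub q).mul ((hasDerivAt_id y).sub_const p)).congr_deriv ?_
    simp only [id]
    ring
  exact hquad.sqrt hP

theorem hasDerivAt_arcsin_affine {p q y : ℝ} (hpy : p < y) (hyq : y < q) :
    HasDerivAt (fun y => arcsin ((2 * y - p - q) / (q - p))) (1 / √((q - y) * (y - p))) y := by
  have hqp : 0 < q - p := by linarith
  have hSS := sq_sqrt (mul_pos (by linarith : 0 < q - y) (by linarith : 0 < y - p)).le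
  have h1 : 1 - ((2 * y - p - q) / (q - p)) ^ 2 = (2 * √((q - y) * (y - p)) / (q - p)) ^ 2 := by
    field_simp
    rw [hSS]
    ring
  have hlt : ((2 * y - p - q) / (q - p)) ^ 2 < 1 := by
    have : 0 < 2 * √((q - y) * (y - p)) / (q - p) := by positivity
    nlinarith [h1]
  have hlin : HasDerivAt (fun y => (2 * y - p - q) / (q - p)) (2 / (q - p)) y := by
    simpa using ((((hasDerivAt_id y).const_mul 2).sub_const p).sub_const q).div_const (q - p)
  convert hlin.arcsin hlt using 1
  rw [h1, sqrt_sq (by positivity)]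
  field_simp

theorem hasDerivAt_arcsin_moebius {p q y : ℝ} (hp : 0 < p) (hpy : p < y) (hyq : y < q) :
    HasDerivAt (fun y => arcsin (((p + q) * y - 2 * p * q) / ((q - p) * y)))
      (√(p * q) / (y * √((q - y) * (y - p)))) y := by
  have hy : 0 < y := hp.trans hpy
  have hqp : 0 < q - p := by linarith
  have hS : 0 < √((q - y) * (y - p)) := sqrt_pos.2 (mul_pos (by linarith) (by linarith))
  have hR : 0 < √(p * q) := sqrt_pos.2 (mul_pos hp (by linarith))
  have hSS := sq_sqrt (mul_pos (by linarith : 0 < q - y) (by linarith : 0 < y - p)).le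
  have hRR := sq_sqrt (mul_pos hp (by linarith : 0 < q)).le
  have h1 : 1 - (((p + q) * y - 2 * p * q) / ((q - p) * y)) ^ 2
      = (2 * √(p * q) * √((q - y) * (y - p)) / ((q - p) * y)) ^ 2 := by
    field_simp
    rw [hRR, hSS]
    ring
  have hlt : (((p + q) * y - 2 * p * q) / ((q - p) * y)) ^ 2 < 1 := by
    have : 0 < 2 * √(p * q) * √((q - y) * (y - p)) / ((q - p) * y) := by positivity
    nlinarith [h1]
  have hfrac : HasDerivAt (fun y => ((p + q) * y - 2 * p * q) / ((q - p) * y))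
      (2 * p * q / ((q - p) * y ^ 2)) y := by
    refine ((((hasDerivAt_id y).const_mul (p + q)).sub_const (2 * p * q)).div
      ((hasDerivAt_id y).const_mul (q - p)) (by positivity)).congr_deriv ?_
    simp only [id]
    field_simp
    ring
  convert hfrac.arcsin hlt using 1
  rw [h1, sqrt_sq (by positivity)]
  field_simp
  linear_combination hRR

theorem hasDerivAt_sqrt_mul_mul_arcsin_moebius {p q y : ℝ} (hp : 0 ≤ p) (hpy : p < y)
    (hyq : y < q) :
    HasDerivAt (fun y => √(p * q) * arcsin (((p + q) * y - 2 * p * q) / ((q - p) * y)))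
      (p * q / (y * √((q - y) * (y - p)))) y := by
  rcases hp.eq_or_lt with rfl | hp
  · simpa using hasDerivAt_const y (0 : ℝ)
  refine ((hasDerivAt_arcsin_moebius hp hpy hyq).const_mul _).congr_deriv ?_
  rw [← mul_div_assoc, ← sq, sq_sqrt (mul_pos hp (hp.trans (hpy.trans hyq))).le]

-- For `p = 0` the last term vanishes identically (`√(p * q) = 0`), although its `arcsin` factor
-- is then discontinuous at `0`, where the junk value `x / 0 = 0` is taken.
noncomputable def sqrtSubMulSubDivPrimitive (p q y : ℝ) : ℝ :=
  √((q - y) * (y - p)) + (p + q) / 2 * arcsin ((2 * y - p - q) / (q - p))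
    - √(p * q) * arcsin (((p + q) * y - 2 * p * q) / ((q - p) * y))

theorem hasDerivAt_sqrtSubMulSubDivPrimitive {p q y : ℝ} (hp : 0 ≤ p) (hpy : p < y)
    (hyq : y < q) :
    HasDerivAt (sqrtSubMulSubDivPrimitive p q) (√((q - y) * (y - p)) / y) y := by
  have hy : 0 < y := hp.trans_lt hpy
  have hS : 0 < √((q - y) * (y - p)) := sqrt_pos.2 (mul_pos (by linarith) (by linarith))
  have hSS := sq_sqrt (mul_pos (by linarith : 0 < q - y) (by linarith : 0 < y - p)).le
  refine (((hasDerivAt_sqrt_sub_mul_sub hpy hyq).add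
    ((hasDerivAt_arcsin_affine hpy hyq).const_mul ((p + q) / 2))).sub
    (hasDerivAt_sqrt_mul_mul_arcsin_moebius hp hpy hyq)).congr_deriv ?_
  field_simp
  linear_combination (-2) * hSS

theorem continuousOn_sqrtSubMulSubDivPrimitive {p q : ℝ} (hp : 0 ≤ p) (hpq : p < q) :
    ContinuousOn (sqrtSubMulSubDivPrimitive p q) (Icc p q) := by
  refine ((Continuous.continuousOn (by fun_prop)).add
    (Continuous.continuousOn (by fun_prop))).sub ?_
  rcases hp.eq_or_lt with rfl | hp
  · simpa using continuousOn_const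
  refine continuousOn_const.mul (continuous_arcsin.comp_continuousOn
    (ContinuousOn.div (by fun_prop) (by fun_prop) fun y hy => ?_))
  exact mul_ne_zero (sub_pos.2 hpq).ne' (hp.trans_le hy.1).ne'

theorem sqrtSubMulSubDivPrimitive_sub {p q : ℝ} (hp : 0 ≤ p) (hpq : p < q) :
    sqrtSubMulSubDivPrimitive p q q - sqrtSubMulSubDivPrimitive p q p
      = π / 2 * (p + q - 2 * √(p * q)) := by
  have hq : 0 < q := hp.trans_lt hpq
  have hqp : q - p ≠ 0 := (sub_pos.2 hpq).ne'
  have h1 : (2 * q - p - q) / (q - p) = 1 := by field_simp; ring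
  have h2 : (2 * p - p - q) / (q - p) = -1 := by field_simp; ring
  have h3 : ((p + q) * q - 2 * p * q) / ((q - p) * q) = 1 := by field_simp; ring
  have h4 : √(p * q) * arcsin (((p + q) * p - 2 * p * q) / ((q - p) * p))
      = -(√(p * q) * (π / 2)) := by
    rcases hp.eq_or_lt with rfl | hp
    · simp
    have : ((p + q) * p - 2 * p * q) / ((q - p) * p) = -1 := by field_simp; ring
    rw [this, arcsin_neg_one]
    ring
  simp only [sqrtSubMulSubDivPrimitive, sub_self, zero_mul, mul_zero, sqrt_zero, h1, h2, h3, h4,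
    arcsin_one, arcsin_neg_one]
  ring

theorem intervalIntegrable_sqrt_sub_mul_sub_div {p q : ℝ} (hp : 0 ≤ p) (hpq : p < q) :
    IntervalIntegrable (fun y => √((q - y) * (y - p)) / y) volume p q := by
  rw [intervalIntegrable_iff_integrableOn_Ioc_of_le hpq.le]
  exact integrableOn_deriv_of_nonneg (continuousOn_sqrtSubMulSubDivPrimitive hp hpq)
    (fun y hy => hasDerivAt_sqrtSubMulSubDivPrimitive hp hy.1 hy.2)
    (fun y hy => div_nonneg (sqrt_nonneg _) (hp.trans hy.1.le))

theorem integral_sqrt_sub_mul_sub_div {p q : ℝ} (hp : 0 ≤ p) (hpq : p < q) :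
    ∫ y in p..q, √((q - y) * (y - p)) / y = π / 2 * (p + q - 2 * √(p * q)) := by
  rw [integral_eq_sub_of_hasDerivAt_of_le hpq.le (continuousOn_sqrtSubMulSubDivPrimitive hp hpq)
    (fun y hy => hasDerivAt_sqrtSubMulSubDivPrimitive hp hy.1 hy.2)
    (intervalIntegrable_sqrt_sub_mul_sub_div hp hpq)]
  exact sqrtSubMulSubDivPrimitive_sub hp hpq

theorem intervalIntegrable_sqrt_sub_mul_sub_div_add {p q s : ℝ} (hps : 0 ≤ p + s)
    (hpq : p < q) :
    IntervalIntegrable (fun x => √((q - x) * (x - p)) / (x + s)) volume p q := by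
  simpa only [add_sub_add_right_eq_sub, add_sub_cancel_right] using
    (intervalIntegrable_sqrt_sub_mul_sub_div hps (add_lt_add_left hpq s)).comp_add_right s

theorem integral_sqrt_sub_mul_sub_div_add {p q s : ℝ} (hps : 0 ≤ p + s) (hpq : p < q) :
    ∫ x in p..q, √((q - x) * (x - p)) / (x + s)
      = π / 2 * (p + q + 2 * s - 2 * √((p + s) * (q + s))) := by
  have h := integral_comp_add_right (fun y => √((q + s - y) * (y - (p + s))) / y) s
    (a := p) (b := q)
  simp only [add_sub_add_right_eq_sub] at h
  rw [h, integral_sqrt_sub_mul_sub_div hps (add_lt_add_left hpq s)]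
  ring

/-- The LMMSE integral against the Marčenko-Pastur density:
`∫ αβ/(x+αβ) f_MP(x) dx = (2β - θ + √(θ² - 4β))/(2β)` with `θ = 1 + β(1+α)`. -/
theorem mse_marcenko_pastur (β α : ℝ) (hβ : 0 < β) (hβ1 : β ≤ 1) (hα : 0 < α)
    (c₁ c₂ θ : ℝ) (hc₁ : c₁ = (1 + Real.sqrt β) ^ 2) (hc₂ : c₂ = (1 - Real.sqrt β) ^ 2)
    (hθ : θ = 1 + β * (1 + α)) :
    ∫ x in c₂..c₁,
        (α * β / (x + α * β)) * (Real.sqrt ((c₁ - x) * (x - c₂)) / (2 * π * x * β)) =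
      (2 * β - θ + Real.sqrt (θ ^ 2 - 4 * β)) / (2 * β) := by
  have hsqrtβ := sq_sqrt hβ.le
  have hc₂_nonneg : 0 ≤ c₂ := hc₂ ▸ sq_nonneg _
  have hc₁' : c₁ = 1 + β + 2 * √β := by rw [hc₁]; linear_combination hsqrtβ
  have hc₂' : c₂ = 1 + β - 2 * √β := by rw [hc₂]; linear_combination hsqrtβ
  have hc : c₂ < c₁ := by rw [hc₁', hc₂']; linarith [sqrt_pos.2 hβ]
  have hsum : c₂ + c₁ = 2 * (1 + β) := by rw [hc₁', hc₂']; ring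
  have hprod : √(c₂ * c₁) = 1 - β := by
    rw [show c₂ * c₁ = (1 - β) ^ 2 by rw [hc₁', hc₂']; linear_combination (-4) * hsqrtβ,
      sqrt_sq (by linarith)]
  have hprod_shift : (c₂ + α * β) * (c₁ + α * β) = θ ^ 2 - 4 * β := by
    rw [hc₁', hc₂', hθ]; linear_combination (-4) * hsqrtβ
  have hsplit : ∫ x in c₂..c₁,
        (α * β / (x + α * β)) * (√((c₁ - x) * (x - c₂)) / (2 * π * x * β))
      = (2 * π * β)⁻¹ * ((∫ x in c₂..c₁, √((c₁ - x) * (x - c₂)) / x)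
        - ∫ x in c₂..c₁, √((c₁ - x) * (x - c₂)) / (x + α * β)) := by
    rw [← integral_sub (intervalIntegrable_sqrt_sub_mul_sub_div hc₂_nonneg hc)
      (intervalIntegrable_sqrt_sub_mul_sub_div_add (by positivity) hc),
      ← intervalIntegral.integral_const_mul]
    refine integral_congr_Ioo_of_le hc.le fun x hx => ?_
    have hx : 0 < x := hc₂_nonneg.trans_lt hx.1
    field_simp
    ring
  rw [hsplit, integral_sqrt_sub_mul_sub_div hc₂_nonneg hc,
    integral_sqrt_sub_mul_sub_div_add (by positivity) hc, hsum, hprod, hprod_shift, hθ]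
  field_simp
  ring
end
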